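/- arXiv:1902.04817 — 4 statements merged into one kernel-verified Lean document; each statement's English description precedes it below -/
import Mathlib

section
/- (A-compactness for satisfiability.) Let A be a fixed finite MTL-chain and P a predicate language. If Σ is a set of P-sentences such that every finite subset Σ₀ ⊆ Σ has an A-model, then Σ has an A-model. -/
noncomputable section
open Classical

universe u

/-- A finite MTL-chain: a finite linearly ordered set with least and greatest
elements, a commutative monoid operation `*` with unit `1 = ⊤` that is monotone
in each argument, and the residuum determined by `a * b ≤ c ↔ a ≤ resid b c`. -/
class MTLChain (A : Type u) extends Fintype A, LinearOrder A, CommMonoid A, BoundedOrder A where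
  one_eq_top : (1 : A) = ⊤
  mul_mono : ∀ {a b : A}, a ≤ b → ∀ c : A, c * a ≤ c * b
  resid : A → A → A
  resid_galois : ∀ a b c : A, a * b ≤ c ↔ a ≤ resid b c

noncomputable instance MTLChain.toCompleteLinearOrder (A : Type u) [MTLChain A] :
    CompleteLinearOrder A :=
  Fintype.toCompleteLinearOrder A

/-- A predicate language: predicate symbols and function symbols, each with
a finite arity.  (Nullary predicates are truth constants, nullary functions
are individual constants.)  Crisp equality `≈` is built into formulas. -/
structure Lang : Type (u + 1) where
  Pred : Type u
  predAr : Pred → ℕ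
  Func : Type u
  funcAr : Func → ℕ

variable {A : Type u} [MTLChain A] {L : Lang.{u}}

/-- Terms of a predicate language, with variables indexed by `ℕ`. -/
inductive Term (L : Lang.{u}) : Type u where
  | var : ℕ → Term L
  | func (f : L.Func) (ts : Fin (L.funcAr f) → Term L) : Term L

/-- Formulas: atomic formulas (predicates applied to terms, and crisp equality),
strong conjunction `&`, weak conjunction `∧`, weak disjunction `∨`,
implication `→`, and the quantifiers. -/
inductive Formula (L : Lang.{u}) : Type u where
  | rel (P : L.Pred) (ts : Fin (L.predAr P) → Term L) : Formula L
  | eq (t₁ t₂ : Term L) : Formula L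
  | sconj (φ ψ : Formula L) : Formula L
  | wconj (φ ψ : Formula L) : Formula L
  | wdisj (φ ψ : Formula L) : Formula L
  | impl (φ ψ : Formula L) : Formula L
  | all (x : ℕ) (φ : Formula L) : Formula L
  | ex (x : ℕ) (φ : Formula L) : Formula L

/-- An `A`-structure for the language `L`: a nonempty domain, an `A`-valued
interpretation of each predicate symbol, and an interpretation of each
function symbol. -/
structure Structure (L : Lang.{u}) (A : Type u) [MTLChain A] : Type (u + 1) where
  Dom : Type u
  [dom_nonempty : Nonempty Dom]
  funMap (f : L.Func) : (Fin (L.funcAr f) → Dom) → Dom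
  relMap (P : L.Pred) : (Fin (L.predAr P) → Dom) → A

attribute [instance] Structure.dom_nonempty

/-- Value of a term under an evaluation of the variables. -/
def Term.val (M : Structure L A) (v : ℕ → M.Dom) : Term L → M.Dom
  | .var n => v n
  | .func f ts => M.funMap f fun i => (ts i).val M v

/-- Truth value of a formula in an `A`-structure under an evaluation of the
variables.  Equality is crisp, `&` is interpreted by `*`, `∧` by minimum,
`∨` by maximum, `→` by the residuum, `∀` by infimum (= minimum) and `∃` by
supremum (= maximum) over the domain. -/
def Formula.val (M : Structure L A) : Formula L → (ℕ → M.Dom) → A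
  | .rel P ts, v => M.relMap P fun i => (ts i).val M v
  | .eq t₁ t₂, v => if t₁.val M v = t₂.val M v then 1 else ⊥
  | .sconj φ ψ, v => φ.val M v * ψ.val M v
  | .wconj φ ψ, v => φ.val M v ⊓ ψ.val M v
  | .wdisj φ ψ, v => φ.val M v ⊔ ψ.val M v
  | .impl φ ψ, v => MTLChain.resid (φ.val M v) (ψ.val M v)
  | .all x φ, v => ⨅ a : M.Dom, φ.val M (Function.update v x a)
  | .ex x φ, v => ⨆ a : M.Dom, φ.val M (Function.update v x a)

/-- Free variables of a term. -/
def Term.fvars : Term L → Set ℕ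
  | .var n => {n}
  | .func _ ts => ⋃ i, (ts i).fvars

/-- Free variables of a formula. -/
def Formula.fvars : Formula L → Set ℕ
  | .rel _ ts => ⋃ i, (ts i).fvars
  | .eq t₁ t₂ => t₁.fvars ∪ t₂.fvars
  | .sconj φ ψ => φ.fvars ∪ ψ.fvars
  | .wconj φ ψ => φ.fvars ∪ ψ.fvars
  | .wdisj φ ψ => φ.fvars ∪ ψ.fvars
  | .impl φ ψ => φ.fvars ∪ ψ.fvars
  | .all x φ => φ.fvars \ {x}
  | .ex x φ => φ.fvars \ {x}

/-- A sentence is a formula with no free variables. -/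
def Formula.IsSentence (φ : Formula L) : Prop := φ.fvars = ∅

/-- `φ` is valid in `M` (i.e. `‖φ‖_M = 1`). -/
def Valid (M : Structure L A) (φ : Formula L) : Prop :=
  ∀ v : ℕ → M.Dom, φ.val M v = 1

/-- `M` is an `A`-model of the set of sentences `T`. -/
def Models (M : Structure L A) (T : Set (Formula L)) : Prop :=
  ∀ φ ∈ T, Valid M φ

/-- Two structures are elementarily equivalent if the same sentences are valid
in both (i.e. they have the same theory). -/
def ElemEquiv (M N : Structure L A) : Prop :=
  ∀ φ : Formula L, φ.IsSentence → (Valid M φ ↔ Valid N φ)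

/-- `g : M → N` is a homomorphism of `A`-structures: it commutes with the
interpretation of function symbols, and preserves truth (value `1`) of
atomic predicates. -/
structure IsHom (M N : Structure L A) (g : M.Dom → N.Dom) : Prop where
  map_fun : ∀ (f : L.Func) (d : Fin (L.funcAr f) → M.Dom),
    g (M.funMap f d) = N.funMap f (g ∘ d)
  map_rel : ∀ (P : L.Pred) (d : Fin (L.predAr P) → M.Dom),
    M.relMap P d = 1 → N.relMap P (g ∘ d) = 1

/-- Atomic formulas. -/
inductive IsAtomicFormula : Formula L → Prop
  | rel (P : L.Pred) (ts : Fin (L.predAr P) → Term L) : IsAtomicFormula (.rel P ts)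
  | eq (t₁ t₂ : Term L) : IsAtomicFormula (.eq t₁ t₂)

/-- Quantifier-free formulas built from atomic formulas using only `∧` and `&`. -/
inductive QFConj : Formula L → Prop
  | atom {φ : Formula L} : IsAtomicFormula φ → QFConj φ
  | sconj {φ ψ : Formula L} : QFConj φ → QFConj ψ → QFConj (.sconj φ ψ)
  | wconj {φ ψ : Formula L} : QFConj φ → QFConj ψ → QFConj (.wconj φ ψ)

/-- Quantifier-free formulas built from atomic formulas using only `∧`. -/
inductive QFWConj : Formula L → Prop
  | atom {φ : Formula L} : IsAtomicFormula φ → QFWConj φ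
  | wconj {φ ψ : Formula L} : QFWConj φ → QFWConj ψ → QFWConj (.wconj φ ψ)

/-- Quantifier-free formulas built from atomic formulas using only `&`. -/
inductive QFSConj : Formula L → Prop
  | atom {φ : Formula L} : IsAtomicFormula φ → QFSConj φ
  | sconj {φ ψ : Formula L} : QFSConj φ → QFSConj ψ → QFSConj (.sconj φ ψ)

/-- Quantifier-free formulas built from atomic formulas using only `∧`, `∨` and `&`. -/
inductive QFPos : Formula L → Prop
  | atom {φ : Formula L} : IsAtomicFormula φ → QFPos φ
  | sconj {φ ψ : Formula L} : QFPos φ → QFPos ψ → QFPos (.sconj φ ψ)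
  | wconj {φ ψ : Formula L} : QFPos φ → QFPos ψ → QFPos (.wconj φ ψ)
  | wdisj {φ ψ : Formula L} : QFPos φ → QFPos ψ → QFPos (.wdisj φ ψ)

/-- Positive-primitive (∧&-primitive) formulas: `(∃ x̄) ψ` with `ψ`
quantifier-free built from atomic formulas using only `∧` and `&`. -/
inductive IsPP : Formula L → Prop
  | base {φ : Formula L} : QFConj φ → IsPP φ
  | ex {φ : Formula L} (x : ℕ) : IsPP φ → IsPP (.ex x φ)

/-- ∧-primitive formulas. -/
inductive IsWPrimitive : Formula L → Prop
  | base {φ : Formula L} : QFWConj φ → IsWPrimitive φ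
  | ex {φ : Formula L} (x : ℕ) : IsWPrimitive φ → IsWPrimitive (.ex x φ)

/-- &-primitive formulas. -/
inductive IsSPrimitive : Formula L → Prop
  | base {φ : Formula L} : QFSConj φ → IsSPrimitive φ
  | ex {φ : Formula L} (x : ℕ) : IsSPrimitive φ → IsSPrimitive (.ex x φ)

/-- Existential positive formulas: `(∃ x̄) ψ` with `ψ` quantifier-free built
from atomic formulas using only `∧`, `∨` and `&`. -/
inductive IsExPos : Formula L → Prop
  | base {φ : Formula L} : QFPos φ → IsExPos φ
  | ex {φ : Formula L} (x : ℕ) : IsExPos φ → IsExPos (.ex x φ)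

/-- The `A`-direct product of a nonempty family of `A`-structures:
cartesian product domain, coordinatewise interpretation of function symbols,
and predicates interpreted by the minimum of the coordinatewise values. -/
def dirProd {I : Type u} [Nonempty I] (Ms : I → Structure L A) : Structure L A where
  Dom := ∀ i, (Ms i).Dom
  funMap f d := fun i => (Ms i).funMap f fun k => d k i
  relMap P d := ⨅ i, (Ms i).relMap P fun k => d k i

/-- The data of a weak `A`-direct product of a family of `A`-structures: an
interpretation of the predicate symbols on the cartesian product taking value
`1` exactly when all the coordinatewise values are `1`. -/
structure WeakProdData {I : Type u} (Ms : I → Structure L A) : Type u where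
  relMap (P : L.Pred) : (Fin (L.predAr P) → ∀ i, (Ms i).Dom) → A
  rel_one_iff : ∀ (P : L.Pred) (d : Fin (L.predAr P) → ∀ i, (Ms i).Dom),
    relMap P d = 1 ↔ ∀ i, (Ms i).relMap P (fun k => d k i) = 1

/-- The weak `A`-direct product structure determined by such data. -/
def WeakProdData.toStructure {I : Type u} [Nonempty I] {Ms : I → Structure L A}
    (W : WeakProdData Ms) : Structure L A where
  Dom := ∀ i, (Ms i).Dom
  funMap f d := fun i => (Ms i).funMap f fun k => d k i
  relMap := W.relMap

/-! Take the ultraproduct of models of the finite subsets of `Sig` along an ultrafilter finer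
than `atTop` on those finite subsets. Since `A` is finite, every `A`-valued
function has a limit along an ultrafilter (the value it takes almost everywhere), and the
operations of `A` as well as infima and suprema, which are attained in a finite chain, commute
with that limit. This is Łoś's theorem for `A`-valued structures, so each `σ ∈ Sig`, valid in
almost every factor, is valid in the ultraproduct. -/

theorem Function.update_eval {κ ι : Type*} [DecidableEq κ] {β : ι → Type*}
    (v : κ → ∀ i, β i) (x : κ) (w : ∀ i, β i) (i : ι) :
    (fun n => Function.update v x w n i) = Function.update (fun n => v n i) x (w i) :=
  funext (Function.apply_update (fun _ g => g i) v x w)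

section UltrafilterLimit

variable {α I : Type*} (U : Ultrafilter I)

/-- The limit along `U` of a function into a finite type: the value it takes `U`-almost
everywhere. -/
def ulim [Finite α] (f : I → α) : α :=
  (Ultrafilter.eq_pure_of_finite (U.map f)).choose

variable [Finite α]

theorem eventually_eq_ulim (f : I → α) : ∀ᶠ i in U, f i = ulim U f := by
  have h : U.map f = pure (ulim U f) := (Ultrafilter.eq_pure_of_finite (U.map f)).choose_spec
  have hmem : {ulim U f} ∈ U.map f := h ▸ Ultrafilter.mem_pure.2 rfl
  exact Ultrafilter.mem_map.1 hmem

variable {U}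

theorem ulim_eq_of_eventually {f : I → α} {a : α} (h : ∀ᶠ i in U, f i = a) : ulim U f = a :=
  let ⟨_, hfa, hf⟩ := (h.and (eventually_eq_ulim U f)).exists
  hf.symm.trans hfa

theorem ulim_congr {f g : I → α} (h : ∀ᶠ i in U, f i = g i) : ulim U f = ulim U g :=
  ulim_eq_of_eventually ((h.and (eventually_eq_ulim U g)).mono fun _ hi => hi.1.trans hi.2)

theorem ulim_map₂ (op : α → α → α) (f g : I → α) :
    ulim U (fun i => op (f i) (g i)) = op (ulim U f) (ulim U g) :=
  ulim_eq_of_eventually <| ((eventually_eq_ulim U f).and (eventually_eq_ulim U g)).mono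
    fun _ hi => by rw [hi.1, hi.2]

theorem ulim_ite (p : I → Prop) (a b : α) :
    ulim U (fun i => if p i then a else b) = if ∀ᶠ i in U, p i then a else b := by
  split_ifs with hp
  · exact ulim_eq_of_eventually (hp.mono fun _ hi => if_pos hi)
  · exact ulim_eq_of_eventually ((Ultrafilter.eventually_not.2 hp).mono fun _ hi => if_neg hi)

theorem ulim_mono [Preorder α] {f g : I → α} (h : ∀ᶠ i in U, f i ≤ g i) :
    ulim U f ≤ ulim U g :=
  let ⟨_, hf, hg, hfg⟩ :=
    ((eventually_eq_ulim U f).and ((eventually_eq_ulim U g).and h)).exists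
  hf ▸ hg ▸ hfg

variable [CompleteLinearOrder α] {X : I → Type*} [∀ i, Nonempty (X i)]

/-- A pointwise minimiser, which exists as `α` is finite, realises the right-hand side. -/
theorem iInf_ulim_eq_ulim_iInf (g : ∀ i, X i → α) :
    ⨅ w : ∀ i, X i, ulim U (fun i => g i (w i)) = ulim U (fun i => ⨅ m, g i m) := by
  refine le_antisymm ?_ (le_iInf fun w => ulim_mono (.of_forall fun i => iInf_le _ (w i)))
  choose w hw using fun i => (Set.range_nonempty (g i)).csInf_mem (Set.toFinite _)
  exact (iInf_le _ w).trans_eq (congrArg (ulim U) (funext hw))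

theorem iSup_ulim_eq_ulim_iSup (g : ∀ i, X i → α) :
    ⨆ w : ∀ i, X i, ulim U (fun i => g i (w i)) = ulim U (fun i => ⨆ m, g i m) := by
  refine le_antisymm (iSup_le fun w => ulim_mono (.of_forall fun i => le_iSup _ (w i))) ?_
  choose w hw using fun i => (Set.range_nonempty (g i)).csSup_mem (Set.toFinite _)
  exact (congrArg (ulim U) (funext hw)).symm.trans_le
    (le_iSup (fun w : ∀ i, X i => ulim U fun i => g i (w i)) w)

end UltrafilterLimit

section Ultraproduct

variable {I : Type u} (U : Ultrafilter I) (Ms : I → Structure L A)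

/-- Operations are computed on representatives chosen by `Quotient.out`; any two choices agree
`U`-almost everywhere. -/
def ultraproduct : Structure L A where
  Dom := (U : Filter I).Product fun i => (Ms i).Dom
  dom_nonempty := ⟨Quotient.mk _ fun _ => Classical.arbitrary _⟩
  funMap f d := Quotient.mk _ fun i => (Ms i).funMap f fun k => (d k).out i
  relMap P d := ulim U fun i => (Ms i).relMap P fun k => (d k).out i

abbrev ultraproductMk (w : ∀ i, (Ms i).Dom) : (ultraproduct U Ms).Dom := Quotient.mk _ w

theorem ultraproductMk_surjective : Function.Surjective (ultraproductMk U Ms) :=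
  Quotient.mk_surjective

variable {U Ms}

theorem eventually_out_ultraproductMk_eq {n : ℕ} (d : Fin n → ∀ i, (Ms i).Dom) :
    ∀ᶠ i in U, (fun k => (ultraproductMk U Ms (d k)).out i) = fun k => d k i :=
  (Filter.eventually_all.2 fun k => Quotient.mk_out (s := Filter.productSetoid _ _) (d k)).mono
    fun _ hi => funext hi

theorem Term.val_ultraproduct (t : Term L) (v : ℕ → ∀ i, (Ms i).Dom) :
    t.val (ultraproduct U Ms) (fun n => ultraproductMk U Ms (v n))
      = ultraproductMk U Ms fun i => t.val (Ms i) fun n => v n i := by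
  induction t with
  | var n => rfl
  | func f ts ih =>
    simp only [Term.val, ih]
    exact Quotient.sound ((eventually_out_ultraproductMk_eq _).mono fun _ hi => congrArg _ hi)

theorem update_ultraproductMk (v : ℕ → ∀ i, (Ms i).Dom) (x : ℕ) (w : ∀ i, (Ms i).Dom) :
    Function.update (fun n => ultraproductMk U Ms (v n)) x (ultraproductMk U Ms w)
      = fun n => ultraproductMk U Ms (Function.update v x w n) :=
  (Function.comp_update _ v x w).symm

theorem Formula.val_ultraproduct (φ : Formula L) (v : ℕ → ∀ i, (Ms i).Dom) :
    φ.val (ultraproduct U Ms) (fun n => ultraproductMk U Ms (v n))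
      = ulim U fun i => φ.val (Ms i) fun n => v n i := by
  induction φ generalizing v with
  | rel P ts =>
    simp only [Formula.val, Term.val_ultraproduct]
    exact ulim_congr ((eventually_out_ultraproductMk_eq _).mono fun _ hi => congrArg _ hi)
  | eq t₁ t₂ =>
    simp only [Formula.val, Term.val_ultraproduct, ulim_ite]
    exact if_congr Quotient.eq rfl rfl
  | sconj φ ψ ihφ ihψ => simp only [Formula.val, ihφ, ihψ, ulim_map₂]
  | wconj φ ψ ihφ ihψ => simp only [Formula.val, ihφ, ihψ, ulim_map₂]
  | wdisj φ ψ ihφ ihψ => simp only [Formula.val, ihφ, ihψ, ulim_map₂]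
  | impl φ ψ ihφ ihψ => simp only [Formula.val, ihφ, ihψ, ulim_map₂]
  | all x φ ih =>
    simp only [Formula.val]
    rw [← (ultraproductMk_surjective U Ms).iInf_comp]
    simp only [update_ultraproductMk, ih, Function.update_eval]
    exact iInf_ulim_eq_ulim_iInf fun i a => φ.val (Ms i) (Function.update (fun n => v n i) x a)
  | ex x φ ih =>
    simp only [Formula.val]
    rw [← (ultraproductMk_surjective U Ms).iSup_comp]
    simp only [update_ultraproductMk, ih, Function.update_eval]
    exact iSup_ulim_eq_ulim_iSup fun i a => φ.val (Ms i) (Function.update (fun n => v n i) x a)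

theorem valid_ultraproduct_of_eventually {φ : Formula L} (h : ∀ᶠ i in U, Valid (Ms i) φ) :
    Valid (ultraproduct U Ms) φ := by
  intro v
  obtain ⟨w, rfl⟩ := (ultraproductMk_surjective U Ms).comp_left v
  exact (Formula.val_ultraproduct φ w).trans (ulim_eq_of_eventually (h.mono fun _ hi => hi _))

end Ultraproduct

theorem A_compactness_satisfiability_general (A : Type u) [MTLChain A] (L : Lang.{u})
    (Sig : Set (Formula L))
    (hfin : ∀ S₀ : Finset (Formula L), ↑S₀ ⊆ Sig →
      ∃ M : Structure L A, Models M (↑S₀ : Set (Formula L))) :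
    ∃ M : Structure L A, Models M Sig := by
  choose Ms hMs using fun S : Finset Sig =>
    hfin (S.map (Function.Embedding.subtype _)) (Finset.map_subtype_subset S)
  let U : Ultrafilter (Finset Sig) := .of Filter.atTop
  refine ⟨ultraproduct U Ms, fun σ hσ => valid_ultraproduct_of_eventually ?_⟩
  have hσU : ∀ᶠ S in (U : Filter (Finset Sig)), (⟨σ, hσ⟩ : Sig) ∈ S :=
    Ultrafilter.of_le _ ((Filter.eventually_ge_atTop {⟨σ, hσ⟩}).mono fun _ =>
      Finset.singleton_subset_iff.1)
  exact hσU.mono fun S hS => hMs S σ (Finset.mem_map_of_mem _ hS)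

/-- **A-compactness for satisfiability.**  Let `A` be a fixed finite MTL-chain
and `L` a predicate language.  If `Sig` is a set of `L`-sentences such that
every finite subset `S₀ ⊆ Sig` has an `A`-model, then `Sig` has an `A`-model. -/
theorem A_compactness_satisfiability (A : Type u) [MTLChain A] (L : Lang.{u})
    (Sig : Set (Formula L)) (hsent : ∀ σ ∈ Sig, σ.IsSentence)
    (hfin : ∀ S₀ : Finset (Formula L), ↑S₀ ⊆ Sig →
      ∃ M : Structure L A, Models M (↑S₀ : Set (Formula L))) :
    ∃ M : Structure L A, Models M Sig :=
  A_compactness_satisfiability_general A L Sig hfin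
end
end

section
/- (A-compactness for consequence.) Let A be a fixed finite MTL-chain and P a predicate language. For every set of P-sentences Σ and every P-sentence φ, if Σ ⊨_A φ, then there is a finite subset Σ₀ ⊆ Σ such that Σ₀ ⊨_A φ. -/
noncomputable section
open Classical

universe u

variable {A : Type u} [MTLChain A] {L : Lang.{u}}

/-! If every finite `S ⊆ Sig` has an `A`-model `M_S` in which `φ` fails, take an ultrafilter on
the finite subsets of `Sig` containing every cone `{T | S ⊆ T}`. Since `A` is finite, every
`A`-valued function on the index set has a limit along the ultrafilter, and Łoś's theorem holds
in the form `‖ψ‖_{∏ M_S / U} = lim_U ‖ψ‖_{M_S}`. Hence the ultraproduct is an `A`-model of `Sig`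
in which `φ` is not valid. -/

open Filter Function

section Ultralim

variable {I α β γ : Type*} {U : Ultrafilter I} [Finite α]

theorem Ultrafilter.exists_eventually_eq (U : Ultrafilter I) (b : I → α) :
    ∃ a, ∀ᶠ i in U, b i = a :=
  U.eventually_exists_iff.mp (Eventually.of_forall fun i => ⟨b i, rfl⟩)

def ultralim (U : Ultrafilter I) (b : I → α) : α :=
  (U.exists_eventually_eq b).choose

theorem eventually_eq_ultralim (b : I → α) : ∀ᶠ i in U, b i = ultralim U b :=
  (U.exists_eventually_eq b).choose_spec

theorem ultralim_eq_iff {b : I → α} {a : α} : ultralim U b = a ↔ ∀ᶠ i in U, b i = a := by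
  refine ⟨fun h => h ▸ eventually_eq_ultralim b, fun h => ?_⟩
  obtain ⟨i, hi, hi'⟩ := ((eventually_eq_ultralim b).and h).exists
  exact hi.symm.trans hi'

theorem ultralim_congr {b c : I → α} (h : ∀ᶠ i in U, b i = c i) :
    ultralim U b = ultralim U c :=
  ultralim_eq_iff.2 <| (h.and (eventually_eq_ultralim c)).mono fun _ h => h.1.trans h.2

theorem ultralim_map₂ [Finite β] [Finite γ] (f : α → β → γ) (b : I → α) (c : I → β) :
    ultralim U (fun i => f (b i) (c i)) = f (ultralim U b) (ultralim U c) :=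
  ultralim_eq_iff.2 <| ((eventually_eq_ultralim b).and (eventually_eq_ultralim c)).mono
    fun _ h => by rw [h.1, h.2]

theorem ultralim_mono [Preorder α] {b c : I → α} (h : ∀ i, b i ≤ c i) :
    ultralim U b ≤ ultralim U c := by
  obtain ⟨i, hb, hc⟩ := ((eventually_eq_ultralim b).and (eventually_eq_ultralim c)).exists
  exact hb ▸ hc ▸ h i

variable [CompleteLinearOrder α] {D : I → Type*} [∀ i, Nonempty (D i)]

-- Both rely on `F i` attaining its infimum (supremum), as it takes finitely many values.
theorem iInf_ultralim (F : ∀ i, D i → α) :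
    ⨅ g : ∀ i, D i, ultralim U (fun i => F i (g i)) = ultralim U fun i => ⨅ d, F i d := by
  refine le_antisymm ?_ (le_iInf fun g => ultralim_mono fun i => iInf_le _ _)
  choose g hg using fun i => (Set.range_nonempty (F i)).csInf_mem (Set.toFinite _)
  exact iInf_le_of_le g (ultralim_mono fun i => (hg i).le)

theorem iSup_ultralim (F : ∀ i, D i → α) :
    ⨆ g : ∀ i, D i, ultralim U (fun i => F i (g i)) = ultralim U fun i => ⨆ d, F i d := by
  refine le_antisymm (iSup_le fun g => ultralim_mono fun i => le_iSup _ _) ?_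
  choose g hg using fun i => (Set.range_nonempty (F i)).csSup_mem (Set.toFinite _)
  exact le_iSup_of_le g (ultralim_mono fun i => (hg i).ge)

end Ultralim

namespace Structure

variable {I : Type u} (U : Ultrafilter I) (Ms : I → Structure L A)

def ultraproduct : Structure L A where
  Dom := (U : Filter I).Product fun i => (Ms i).Dom
  dom_nonempty := ⟨Quotient.mk _ fun i => Classical.arbitrary (Ms i).Dom⟩
  funMap f d := Quotient.mk _ fun i => (Ms i).funMap f fun k => (d k).out i
  relMap P d := ultralim U fun i => (Ms i).relMap P fun k => (d k).out i

end Structure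

namespace Structure.ultraproduct

variable {I : Type u} {U : Ultrafilter I} {Ms : I → Structure L A}

def mk (g : ∀ i, (Ms i).Dom) : (ultraproduct U Ms).Dom :=
  Quotient.mk _ g

theorem mk_surjective : Surjective (mk (U := U) (Ms := Ms)) :=
  Quotient.mk_surjective

theorem mk_eq_mk {g h : ∀ i, (Ms i).Dom} :
    mk (U := U) g = mk h ↔ ∀ᶠ i in U, g i = h i :=
  Quotient.eq

theorem eventually_out_mk {n : ℕ} (d : Fin n → ∀ i, (Ms i).Dom) :
    ∀ᶠ i in U, (fun k => Quotient.out (mk (U := U) (d k)) i) = fun k => d k i := by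
  simpa only [funext_iff] using
    eventually_all.2 fun k => mk_eq_mk.1 (Quotient.out_eq (mk (d k)))

theorem mk_update (v : ℕ → ∀ i, (Ms i).Dom) (x : ℕ) (g : ∀ i, (Ms i).Dom) :
    update (fun n => mk (U := U) (v n)) x (mk g) = fun n => mk (update v x g n) :=
  funext fun n => (apply_update (fun _ => mk) v x g n).symm

theorem term_val_mk (v : ℕ → ∀ i, (Ms i).Dom) (t : Term L) :
    t.val (ultraproduct U Ms) (fun n => mk (v n)) = mk fun i => t.val (Ms i) fun n => v n i := by
  induction t with
  | var n => rfl
  | func f ts ih =>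
    refine mk_eq_mk.2 ((eventually_out_mk fun k i => (ts k).val (Ms i) fun n => v n i).mono
      fun i hi => ?_)
    simp only [Term.val, ih]
    exact congrArg _ hi

theorem val_mk (ψ : Formula L) (v : ℕ → ∀ i, (Ms i).Dom) :
    ψ.val (ultraproduct U Ms) (fun n => mk (v n)) =
      ultralim U fun i => ψ.val (Ms i) fun n => v n i := by
  have update_apply : ∀ (v : ℕ → ∀ i, (Ms i).Dom) x g i,
      (fun n => update v x g n i) = update (fun n => v n i) x (g i) :=
    fun v x g i => funext fun n => apply_update (fun _ h => h i) v x g n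
  induction ψ generalizing v with
  | rel P ts =>
    refine ultralim_congr ((eventually_out_mk fun k i => (ts k).val (Ms i) fun n => v n i).mono
      fun i hi => ?_)
    simp only [term_val_mk]
    exact congrArg _ hi
  | eq t₁ t₂ =>
    simp only [Formula.val, term_val_mk, mk_eq_mk]
    split_ifs with h
    · exact (ultralim_eq_iff.2 (h.mono fun i hi => if_pos hi)).symm
    · exact (ultralim_eq_iff.2 ((Ultrafilter.eventually_not.2 h).mono fun i hi => if_neg hi)).symm
  | sconj φ ψ ihφ ihψ => simp only [Formula.val, ihφ, ihψ, ultralim_map₂]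
  | wconj φ ψ ihφ ihψ => simp only [Formula.val, ihφ, ihψ, ultralim_map₂]
  | wdisj φ ψ ihφ ihψ => simp only [Formula.val, ihφ, ihψ, ultralim_map₂]
  | impl φ ψ ihφ ihψ => simp only [Formula.val, ihφ, ihψ, ultralim_map₂]
  | all x φ ih =>
    simp only [Formula.val, ← mk_surjective.iInf_comp, mk_update, ih, update_apply]
    exact iInf_ultralim fun i a => φ.val (Ms i) (update (fun n => v n i) x a)
  | ex x φ ih =>
    simp only [Formula.val, ← mk_surjective.iSup_comp, mk_update, ih, update_apply]
    exact iSup_ultralim fun i a => φ.val (Ms i) (update (fun n => v n i) x a)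

theorem valid_iff (φ : Formula L) : Valid (ultraproduct U Ms) φ ↔ ∀ᶠ i in U, Valid (Ms i) φ := by
  constructor
  · intro h
    by_contra hn
    let w i : ℕ → (Ms i).Dom := Classical.epsilon fun w => φ.val (Ms i) w ≠ 1
    have hw := h fun n => mk fun i => w i n
    rw [val_mk, ultralim_eq_iff] at hw
    obtain ⟨i, hi1, hi⟩ := (hw.and (Ultrafilter.eventually_not.2 hn)).exists
    exact Classical.epsilon_spec (not_forall.1 hi) hi1
  · intro h w
    obtain ⟨v, rfl⟩ : ∃ v : ℕ → ∀ i, (Ms i).Dom, (fun n => mk (v n)) = w :=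
      ⟨fun n => (w n).out, funext fun n => Quotient.out_eq (w n)⟩
    rw [val_mk, ultralim_eq_iff]
    exact h.mono fun i hi => hi _

end Structure.ultraproduct

theorem A_compactness_consequence_general (A : Type u) [MTLChain A] (L : Lang.{u})
    (Sig : Set (Formula L)) (φ : Formula L)
    (h : ∀ M : Structure L A, Models M Sig → Valid M φ) :
    ∃ S₀ : Finset (Formula L), ↑S₀ ⊆ Sig ∧
      ∀ M : Structure L A, Models M (↑S₀ : Set (Formula L)) → Valid M φ := by
  by_contra! hcon
  choose Ms hMs hφMs using fun S : Finset Sig => hcon (S.map (Embedding.subtype _)) (by simp)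
  let U : Ultrafilter (Finset Sig) := .of atTop
  have hSig : Models (Structure.ultraproduct U Ms) Sig := fun σ hσ =>
    (Structure.ultraproduct.valid_iff σ).2 <|
      ((eventually_ge_atTop {⟨σ, hσ⟩}).filter_mono (Ultrafilter.of_le _)).mono
        fun S hS => hMs S σ (Finset.mem_map_of_mem _ (Finset.singleton_subset_iff.1 hS))
  obtain ⟨S, hS⟩ := ((Structure.ultraproduct.valid_iff φ).1 (h _ hSig)).exists
  exact hφMs S hS

/-- **A-compactness for consequence.**  If `Sig ⊨_A φ`, then there is a finite
subset `S₀ ⊆ Sig` such that `S₀ ⊨_A φ`. -/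
theorem A_compactness_consequence (A : Type u) [MTLChain A] (L : Lang.{u})
    (Sig : Set (Formula L)) (φ : Formula L)
    (hsent : ∀ σ ∈ Sig, σ.IsSentence) (hφ : φ.IsSentence)
    (h : ∀ M : Structure L A, Models M Sig → Valid M φ) :
    ∃ S₀ : Finset (Formula L), ↑S₀ ⊆ Sig ∧
      ∀ M : Structure L A, Models M (↑S₀ : Set (Formula L)) → Valid M φ :=
  A_compactness_consequence_general A L Sig φ h
end
end

section
/- (Lemma 3.2: pp-formulas and weak A-direct products.) Let A be a fixed finite MTL-chain, P a predicate language, I a nonempty set, and (M_i)_{i∈I} a family of A-structures for P. Let φ(x₁,…,xₙ) be a positive-primitive P-formula and let d̄₁,…,d̄ₙ be elements of the cartesian product Π_{i∈I} M_i. Then for every weak A-direct product M of the family (M_i)_{i∈I}: ||φ(d̄₁(i),…,d̄ₙ(i))||_{M_i} = 1 for every i ∈ I if and only if ||φ(d̄₁,…,d̄ₙ)||_M = 1. -/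
noncomputable section
open Classical

universe u

variable {A : Type u} [MTLChain A] {L : Lang.{u}}

/-
Truth value `1` is preserved and reflected coordinatewise by every connective of a pp-formula.
For atoms this is the defining property of a weak product (crisp equality of tuples is
coordinatewise equality), for `&` and `∧` it holds because `1` is the top element, so that
`a * b = 1` and `a ⊓ b = 1` both mean `a = b = 1`, and for `∃` because a supremum in the finite
chain `A` is attained: witnesses chosen in each coordinate assemble into one tuple.
-/

namespace MTLChain

theorem le_one (a : A) : a ≤ 1 := one_eq_top (A := A) ▸ le_top

theorem mul_eq_one_iff {a b : A} : a * b = 1 ↔ a = 1 ∧ b = 1 := by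
  have hle_left : a * b ≤ a := by simpa using mul_mono (le_one b) a
  have hle_right : a * b ≤ b := by simpa [mul_comm] using mul_mono (le_one a) b
  refine ⟨fun h => ⟨?_, ?_⟩, fun ⟨ha, hb⟩ => by rw [ha, hb, one_mul]⟩
  · exact (le_one a).antisymm (h ▸ hle_left)
  · exact (le_one b).antisymm (h ▸ hle_right)

theorem inf_eq_one_iff {a b : A} : a ⊓ b = 1 ↔ a = 1 ∧ b = 1 := by
  simp only [one_eq_top, inf_eq_top_iff]

theorem iSup_eq_one_iff {D : Type*} [Nonempty D] {f : D → A} : ⨆ d, f d = 1 ↔ ∃ d, f d = 1 := by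
  refine ⟨fun h => ?_, fun ⟨d, hd⟩ => (le_one _).antisymm (hd ▸ le_iSup f d)⟩
  obtain ⟨d, hd⟩ := (Set.range_nonempty f).csSup_mem (Set.toFinite _)
  exact ⟨d, hd.trans h⟩

end MTLChain

namespace WeakProdData

variable {I : Type u} [Nonempty I] {Ms : I → Structure L A} (W : WeakProdData Ms)

theorem term_val_apply (v : ℕ → ∀ i, (Ms i).Dom) (t : Term L) (i : I) :
    t.val W.toStructure v i = t.val (Ms i) (fun n => v n i) := by
  induction t with
  | var n => rfl
  | func f ts ih => exact congrArg ((Ms i).funMap f) (funext ih)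

def TruthIsCoordinatewise (φ : Formula L) : Prop :=
  ∀ v : ℕ → ∀ i, (Ms i).Dom, (∀ i, φ.val (Ms i) (fun n => v n i) = 1) ↔ φ.val W.toStructure v = 1

variable {W}

theorem truthIsCoordinatewise_of_isAtomic {φ : Formula L} (hφ : IsAtomicFormula φ) :
    W.TruthIsCoordinatewise φ := by
  intro v
  cases hφ with
  | rel P ts =>
    refine Iff.trans ?_ (W.rel_one_iff P _).symm
    simp only [Formula.val, W.term_val_apply]
  | eq t₁ t₂ =>
    have ite_eq_one : ∀ (c : Prop) [Decidable c], (if c then (1 : A) else ⊥) = 1 ↔ c ∨ (⊥ : A) = 1 :=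
      fun c _ => by by_cases hc : c <;> simp [hc]
    have tuple_eq_iff : t₁.val W.toStructure v = t₂.val W.toStructure v ↔
        ∀ i, t₁.val (Ms i) (fun n => v n i) = t₂.val (Ms i) (fun n => v n i) := by
      simp only [← W.term_val_apply]
      exact funext_iff
    simp only [Formula.val, ite_eq_one, forall_or_right, tuple_eq_iff]

theorem TruthIsCoordinatewise.sconj {φ ψ : Formula L} (hφ : W.TruthIsCoordinatewise φ)
    (hψ : W.TruthIsCoordinatewise ψ) : W.TruthIsCoordinatewise (.sconj φ ψ) := fun v => by
  simp only [Formula.val, MTLChain.mul_eq_one_iff, forall_and, hφ v, hψ v]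

theorem TruthIsCoordinatewise.wconj {φ ψ : Formula L} (hφ : W.TruthIsCoordinatewise φ)
    (hψ : W.TruthIsCoordinatewise ψ) : W.TruthIsCoordinatewise (.wconj φ ψ) := fun v => by
  simp only [Formula.val, MTLChain.inf_eq_one_iff, forall_and, hφ v, hψ v]

theorem TruthIsCoordinatewise.ex {φ : Formula L} (hφ : W.TruthIsCoordinatewise φ) (x : ℕ) :
    W.TruthIsCoordinatewise (.ex x φ) := fun v => by
  have update_apply (a : ∀ i, (Ms i).Dom) (i : I) :
      (fun n => Function.update v x a n i) = Function.update (fun n => v n i) x (a i) :=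
    funext fun n => Function.apply_update (fun _ d => d i) v x a n
  simp only [Formula.val, MTLChain.iSup_eq_one_iff]
  constructor
  · intro h
    choose a ha using h
    exact ⟨a, (hφ _).mp fun i => update_apply a i ▸ ha i⟩
  · rintro ⟨a, ha⟩ i
    exact ⟨a i, update_apply a i ▸ (hφ _).mpr ha i⟩

theorem truthIsCoordinatewise_of_qfConj {φ : Formula L} (hφ : QFConj φ) :
    W.TruthIsCoordinatewise φ := by
  induction hφ with
  | atom h => exact truthIsCoordinatewise_of_isAtomic h
  | sconj _ _ ih₁ ih₂ => exact ih₁.sconj ih₂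
  | wconj _ _ ih₁ ih₂ => exact ih₁.wconj ih₂

end WeakProdData

open WeakProdData in
/-- **Lemma 3.2: pp-formulas and weak A-direct products.**  Let `φ` be a
positive-primitive formula and `v` an evaluation in the cartesian product
(sending each `xₖ` to the tuple `d̄ₖ`).  For every weak `A`-direct product `M`
of the family, `‖φ‖_{M_i, v(·)(i)} = 1` for every `i ∈ I` iff `‖φ‖_{M,v} = 1`. -/
theorem pp_weak_dirProd {A : Type u} [MTLChain A] {L : Lang.{u}}
    {I : Type u} [Nonempty I] (Ms : I → Structure L A) (W : WeakProdData Ms)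
    (φ : Formula L) (hφ : IsPP φ) (v : ℕ → ∀ i, (Ms i).Dom) :
    (∀ i, φ.val (Ms i) (fun n => v n i) = 1) ↔ φ.val W.toStructure v = 1 := by
  suffices W.TruthIsCoordinatewise φ from this v
  induction hφ with
  | base h => exact truthIsCoordinatewise_of_qfConj h
  | ex x _ ih => exact ih.ex x
end
end

section
/- (Theorem 4.1: axiomatization by pp-sentences.) Let A be a fixed finite MTL-chain, P a predicate language, and T a set of P-sentences that has an A-model. Then T is closed under homomorphisms and closed under A-direct products if and only if T is axiomatized by a set of positive-primitive P-sentences. -/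
noncomputable section
open Classical

universe u

variable {A : Type u} [MTLChain A] {L : Lang.{u}}

/-!
Pp-sentences are preserved by homomorphisms and by `A`-direct products. Conversely, let `N`
satisfy every pp-sentence valid in all models of `T`. A direct product `M` of models of `T`, one
refuting each pp-sentence that fails in some model, is a model of `T` whose valid pp-sentences are
exactly the pp-consequences of `T`. Each finite part of the positive diagram of `M` is expressed by
a pp-sentence valid in `M`, hence in `N`, so it is realized in `N`; an ultrafilter on the finite
parts glues these realizations into a homomorphism from `M` to an ultrapower of `N`. That
ultrapower is then a model of `T`, and so is `N` by Łoś's theorem, which holds because `A` is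
finite.
-/

theorem MTLChain.le_one_s11 (a : A) : a ≤ 1 :=
  MTLChain.one_eq_top (A := A) ▸ le_top

theorem MTLChain.eq_one_of_one_eq_bot (h : (1 : A) = ⊥) (a : A) : a = 1 :=
  (MTLChain.le_one_s11 a).antisymm (h ▸ bot_le)

theorem MTLChain.mul_le_left (a b : A) : a * b ≤ a :=
  calc a * b ≤ a * 1 := MTLChain.mul_mono (MTLChain.le_one_s11 b) a
    _ = a := mul_one a

theorem MTLChain.mul_eq_one_iff_s11 {a b : A} : a * b = 1 ↔ a = 1 ∧ b = 1 := by
  refine ⟨fun h => ⟨(MTLChain.le_one_s11 a).antisymm ?_, (MTLChain.le_one_s11 b).antisymm ?_⟩,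
    fun ⟨ha, hb⟩ => by rw [ha, hb, mul_one]⟩
  · exact h ▸ MTLChain.mul_le_left a b
  · exact h ▸ mul_comm b a ▸ MTLChain.mul_le_left b a

theorem MTLChain.inf_eq_one_iff_s11 {a b : A} : a ⊓ b = 1 ↔ a = 1 ∧ b = 1 := by
  rw [MTLChain.one_eq_top, inf_eq_top_iff]

theorem MTLChain.iInf_eq_one_iff {ι : Sort*} {f : ι → A} : ⨅ i, f i = 1 ↔ ∀ i, f i = 1 := by
  rw [MTLChain.one_eq_top, iInf_eq_top]

theorem MTLChain.ite_eq_one_iff {c : Prop} [Decidable c] :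
    (if c then (1 : A) else ⊥) = 1 ↔ c ∨ (1 : A) = ⊥ := by
  split_ifs with hc <;> simp [hc, eq_comm]

theorem Finite.exists_eq_iSup {α ι : Type*} [CompleteLinearOrder α] [Finite α] [Nonempty ι]
    (f : ι → α) : ∃ i, f i = ⨆ j, f j :=
  (Set.range_nonempty f).csSup_mem (Set.toFinite _)

theorem Finite.exists_eq_iInf {α ι : Type*} [CompleteLinearOrder α] [Finite α] [Nonempty ι]
    (f : ι → α) : ∃ i, f i = ⨅ j, f j :=
  (Set.range_nonempty f).csInf_mem (Set.toFinite _)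

theorem MTLChain.iSup_eq_one_iff_s11 {ι : Type*} [Nonempty ι] {f : ι → A} :
    ⨆ i, f i = 1 ↔ ∃ i, f i = 1 := by
  refine ⟨fun h => ?_, fun ⟨i, hi⟩ => (MTLChain.le_one_s11 _).antisymm (hi ▸ le_iSup f i)⟩
  obtain ⟨i, hi⟩ := Finite.exists_eq_iSup f
  exact ⟨i, hi.trans h⟩

theorem Term.val_congr {M : Structure L A} {v w : ℕ → M.Dom} {t : Term L}
    (h : ∀ n ∈ t.fvars, v n = w n) : t.val M v = t.val M w := by
  induction t with
  | var n => exact h n rfl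
  | func f ts ih =>
    exact congrArg (M.funMap f) (funext fun i => ih i fun n hn => h n (Set.mem_iUnion.2 ⟨i, hn⟩))

theorem Formula.val_congr {M : Structure L A} {φ : Formula L} {v w : ℕ → M.Dom}
    (h : ∀ n ∈ φ.fvars, v n = w n) : φ.val M v = φ.val M w := by
  induction φ generalizing v w with
  | rel P ts =>
    exact congrArg (M.relMap P)
      (funext fun i => Term.val_congr fun n hn => h n (Set.mem_iUnion.2 ⟨i, hn⟩))
  | eq t₁ t₂ =>
    simp only [Formula.val, Term.val_congr fun n hn => h n (Or.inl hn),
      Term.val_congr fun n hn => h n (Or.inr hn)]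
  | sconj φ ψ ihφ ihψ | wconj φ ψ ihφ ihψ | wdisj φ ψ ihφ ihψ | impl φ ψ ihφ ihψ =>
    simp only [Formula.val, ihφ fun n hn => h n (Or.inl hn), ihψ fun n hn => h n (Or.inr hn)]
  | all x φ ih | ex x φ ih =>
    simp only [Formula.val]
    congr 1
    funext a
    refine ih fun n hn => ?_
    by_cases hx : n = x
    · simp [hx]
    · simpa [hx] using h n ⟨hn, hx⟩

theorem Formula.IsSentence.valid_iff {M : Structure L A} {σ : Formula L} (hσ : σ.IsSentence)
    (v : ℕ → M.Dom) : Valid M σ ↔ σ.val M v = 1 :=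
  ⟨fun h => h v, fun h _ =>
    (Formula.val_congr fun n hn => absurd hn (Set.eq_empty_iff_forall_notMem.1 hσ n)).trans h⟩

theorem IsHom.map_val {M N : Structure L A} {g : M.Dom → N.Dom} (hg : IsHom M N g)
    (v : ℕ → M.Dom) (t : Term L) : g (t.val M v) = t.val N (g ∘ v) := by
  induction t with
  | var n => rfl
  | func f ts ih => exact (hg.map_fun f _).trans (congrArg (N.funMap f) (funext ih))

theorem QFConj.val_eq_one_of_isHom {M N : Structure L A} {g : M.Dom → N.Dom} {φ : Formula L}
    (hφ : QFConj φ) (hg : IsHom M N g) {v : ℕ → M.Dom} (h : φ.val M v = 1) :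
    φ.val N (g ∘ v) = 1 := by
  induction hφ with
  | atom ha =>
    cases ha with
    | rel P ts =>
      simpa only [Formula.val, Function.comp_def, hg.map_val] using hg.map_rel P _ h
    | eq t₁ t₂ =>
      simp only [Formula.val, MTLChain.ite_eq_one_iff, ← hg.map_val] at h ⊢
      exact h.imp_left (congrArg g)
  | sconj _ _ ih₁ ih₂ =>
    simp only [Formula.val, MTLChain.mul_eq_one_iff_s11] at h ⊢
    exact ⟨ih₁ h.1, ih₂ h.2⟩
  | wconj _ _ ih₁ ih₂ =>
    simp only [Formula.val, MTLChain.inf_eq_one_iff_s11] at h ⊢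
    exact ⟨ih₁ h.1, ih₂ h.2⟩

theorem IsPP.val_eq_one_of_isHom {M N : Structure L A} {g : M.Dom → N.Dom} {φ : Formula L}
    (hφ : IsPP φ) (hg : IsHom M N g) {v : ℕ → M.Dom} (h : φ.val M v = 1) :
    φ.val N (g ∘ v) = 1 := by
  induction hφ generalizing v with
  | base hq => exact hq.val_eq_one_of_isHom hg h
  | ex x _ ih =>
    obtain ⟨a, ha⟩ := MTLChain.iSup_eq_one_iff_s11.1 h
    exact MTLChain.iSup_eq_one_iff_s11.2 ⟨g a, Function.comp_update g v x a ▸ ih ha⟩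

theorem IsPP.valid_of_isHom {M N : Structure L A} {g : M.Dom → N.Dom} {σ : Formula L}
    (hσ : IsPP σ) (hs : σ.IsSentence) (hg : IsHom M N g) (h : Valid M σ) : Valid N σ :=
  (hs.valid_iff (g ∘ fun _ => Classical.ofNonempty)).2 (hσ.val_eq_one_of_isHom hg (h _))

section DirectProduct

variable {I : Type u} [Nonempty I] {Ms : I → Structure L A}

theorem isHom_dirProd_eval (i : I) : IsHom (dirProd Ms) (Ms i) (fun d => d i) where
  map_fun _ _ := rfl
  map_rel _ _ h := MTLChain.iInf_eq_one_iff.1 h i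

theorem Term.val_dirProd (v : ℕ → (dirProd Ms).Dom) (t : Term L) (i : I) :
    t.val (dirProd Ms) v i = t.val (Ms i) (fun n => v n i) :=
  (isHom_dirProd_eval i).map_val v t

theorem QFConj.val_dirProd_eq_one {φ : Formula L} (hφ : QFConj φ) {v : ℕ → (dirProd Ms).Dom}
    (h : ∀ i, φ.val (Ms i) (fun n => v n i) = 1) : φ.val (dirProd Ms) v = 1 := by
  induction hφ with
  | atom ha =>
    cases ha with
    | rel P ts =>
      refine MTLChain.iInf_eq_one_iff.2 fun i => ?_
      simpa only [Formula.val, ← Term.val_dirProd] using h i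
    | eq t₁ t₂ =>
      simp only [Formula.val, MTLChain.ite_eq_one_iff, ← Term.val_dirProd] at h ⊢
      by_cases hone : (1 : A) = ⊥
      · exact Or.inr hone
      · exact Or.inl (funext fun i => (h i).resolve_right hone)
  | sconj _ _ ih₁ ih₂ =>
    simp only [Formula.val, MTLChain.mul_eq_one_iff_s11] at h ⊢
    exact ⟨ih₁ fun i => (h i).1, ih₂ fun i => (h i).2⟩
  | wconj _ _ ih₁ ih₂ =>
    simp only [Formula.val, MTLChain.inf_eq_one_iff_s11] at h ⊢
    exact ⟨ih₁ fun i => (h i).1, ih₂ fun i => (h i).2⟩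

theorem IsPP.val_dirProd_eq_one {φ : Formula L} (hφ : IsPP φ) {v : ℕ → (dirProd Ms).Dom}
    (h : ∀ i, φ.val (Ms i) (fun n => v n i) = 1) : φ.val (dirProd Ms) v = 1 := by
  induction hφ generalizing v with
  | base hq => exact hq.val_dirProd_eq_one h
  | ex x _ ih =>
    choose a ha using fun i => MTLChain.iSup_eq_one_iff_s11.1 (h i)
    refine MTLChain.iSup_eq_one_iff_s11.2 ⟨a, ih fun i => ?_⟩
    have hu : (fun n => Function.update v x a n i) = Function.update (fun n => v n i) x (a i) :=
      Function.comp_update (fun d : (dirProd Ms).Dom => d i) v x a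
    exact hu ▸ ha i

theorem IsPP.valid_dirProd {σ : Formula L} (hσ : IsPP σ) (h : ∀ i, Valid (Ms i) σ) :
    Valid (dirProd Ms) σ :=
  fun _ => hσ.val_dirProd_eq_one fun i => h i _

end DirectProduct

namespace Ultrafilter

variable {α J : Type*} (U : Ultrafilter J)

theorem exists_eventually_eq_s11 [Finite α] (f : J → α) : ∃ a, ∀ᶠ j in U, f j = a := by
  obtain ⟨a, ha⟩ := (U.map f).eq_pure_of_finite
  exact ⟨a, show {a} ∈ U.map f from ha ▸ Filter.mem_pure.2 rfl⟩

def limFinite [Finite α] (f : J → α) : α := (U.exists_eventually_eq_s11 f).choose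

variable [Finite α] {U}

theorem eventually_eq_limFinite (f : J → α) : ∀ᶠ j in U, f j = U.limFinite f :=
  (U.exists_eventually_eq_s11 f).choose_spec

theorem limFinite_eq_of_eventually {f : J → α} {a : α} (h : ∀ᶠ j in U, f j = a) :
    U.limFinite f = a :=
  have ⟨_, hj, hj'⟩ := (h.and (eventually_eq_limFinite f)).exists
  hj'.symm.trans hj

theorem limFinite_eq_iff {f : J → α} {a : α} : U.limFinite f = a ↔ ∀ᶠ j in U, f j = a :=
  ⟨fun h => h ▸ eventually_eq_limFinite f, limFinite_eq_of_eventually⟩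

theorem limFinite_congr {f g : J → α} (h : f =ᶠ[U] g) : U.limFinite f = U.limFinite g :=
  limFinite_eq_of_eventually (h.trans (eventually_eq_limFinite g))

theorem limFinite_const (a : α) : U.limFinite (fun _ => a) = a :=
  limFinite_eq_of_eventually (Filter.Eventually.of_forall fun _ => rfl)

theorem limFinite_map₂ {β γ : Type*} [Finite β] [Finite γ] (op : α → β → γ) (f : J → α)
    (g : J → β) :
    U.limFinite (fun j => op (f j) (g j)) = op (U.limFinite f) (U.limFinite g) :=
  limFinite_eq_of_eventually <|
    ((eventually_eq_limFinite f).and (eventually_eq_limFinite g)).mono fun _ h => by rw [h.1, h.2]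

theorem limFinite_ite (p : J → Prop) [DecidablePred p] (a b : α)
    [Decidable (∀ᶠ j in U, p j)] :
    U.limFinite (fun j => if p j then a else b) = if ∀ᶠ j in U, p j then a else b := by
  split_ifs with h
  · exact limFinite_eq_of_eventually (h.mono fun j hj => if_pos hj)
  · exact limFinite_eq_of_eventually ((eventually_not.2 h).mono fun j hj => if_neg hj)

theorem limFinite_mono [Preorder α] {f g : J → α} (h : ∀ j, f j ≤ g j) :
    U.limFinite f ≤ U.limFinite g :=
  have ⟨j, hf, hg⟩ := ((eventually_eq_limFinite f).and (eventually_eq_limFinite g)).exists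
  hf ▸ hg ▸ h j

theorem iSup_limFinite [CompleteLinearOrder α] {β : Type*} [Nonempty β] (h : J → β → α) :
    ⨆ w : J → β, U.limFinite (fun j => h j (w j)) = U.limFinite (fun j => ⨆ b, h j b) := by
  choose w hw using fun j => Finite.exists_eq_iSup (h j)
  refine le_antisymm (iSup_le fun w' => limFinite_mono fun j => le_iSup (h j) (w' j)) ?_
  exact (limFinite_congr (Filter.Eventually.of_forall fun j => (hw j).symm)).le.trans
    (le_iSup (fun w : J → β => U.limFinite fun j => h j (w j)) w)

theorem iInf_limFinite [CompleteLinearOrder α] {β : Type*} [Nonempty β] (h : J → β → α) :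
    ⨅ w : J → β, U.limFinite (fun j => h j (w j)) = U.limFinite (fun j => ⨅ b, h j b) := by
  choose w hw using fun j => Finite.exists_eq_iInf (h j)
  refine le_antisymm ?_ (le_iInf fun w' => limFinite_mono fun j => iInf_le (h j) (w' j))
  exact (iInf_le (fun w : J → β => U.limFinite fun j => h j (w j)) w).trans
    (limFinite_congr (Filter.Eventually.of_forall fun j => hw j)).le

end Ultrafilter

section Ultrapower

variable {J : Type u} (U : Ultrafilter J) (N : Structure L A)

def ultraPower : Structure L A where
  Dom := Quotient ((U : Filter J).germSetoid N.Dom)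
  dom_nonempty := (nonempty_quotient_iff _).2 inferInstance
  funMap f d := Quotient.mk _ fun j => N.funMap f fun k => (d k).out j
  relMap P d := U.limFinite fun j => N.relMap P fun k => (d k).out j

variable {U N}

def ultraPower.mk (x : J → N.Dom) : (ultraPower U N).Dom := Quotient.mk _ x

theorem ultraPower.mk_surjective : Function.Surjective (ultraPower.mk (U := U) (N := N)) :=
  Quotient.mk_surjective

theorem ultraPower.mk_eq_mk {x y : J → N.Dom} : mk (U := U) x = mk y ↔ x =ᶠ[U] y :=
  Quotient.eq

theorem ultraPower.eventually_out_mk {n : ℕ} (x : Fin n → J → N.Dom) :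
    ∀ᶠ j in U, (fun k => (mk (U := U) (x k)).out j) = fun k => x k j :=
  (Filter.eventually_all.2 fun k =>
    Quotient.mk_out (s := (U : Filter J).germSetoid N.Dom) (x k)).mono fun _ => funext

theorem ultraPower.funMap_mk (f : L.Func) (x : Fin (L.funcAr f) → J → N.Dom) :
    (ultraPower U N).funMap f (fun k => mk (x k)) = mk fun j => N.funMap f fun k => x k j :=
  Quotient.sound ((eventually_out_mk x).mono fun _ h => congrArg (N.funMap f) h)

theorem ultraPower.relMap_mk (P : L.Pred) (x : Fin (L.predAr P) → J → N.Dom) :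
    (ultraPower U N).relMap P (fun k => mk (x k)) =
      U.limFinite fun j => N.relMap P fun k => x k j :=
  Ultrafilter.limFinite_congr ((eventually_out_mk x).mono fun _ h => congrArg (N.relMap P) h)

theorem Term.val_ultraPower (V : ℕ → J → N.Dom) (t : Term L) :
    t.val (ultraPower U N) (fun n => ultraPower.mk (V n)) =
      ultraPower.mk fun j => t.val N fun n => V n j := by
  induction t with
  | var n => rfl
  | func f ts ih => simp only [Term.val, ih, ultraPower.funMap_mk]

theorem Formula.val_update_ultraPower {φ : Formula L}
    (hφ : ∀ V : ℕ → J → N.Dom, φ.val (ultraPower U N) (fun n => ultraPower.mk (V n)) =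
      U.limFinite fun j => φ.val N fun n => V n j)
    (V : ℕ → J → N.Dom) (x : ℕ) (w : J → N.Dom) :
    φ.val (ultraPower U N)
        (Function.update (fun n => ultraPower.mk (V n)) x (ultraPower.mk w)) =
      U.limFinite fun j => φ.val N (Function.update (fun n => V n j) x (w j)) := by
  have h₁ := Function.comp_update (ultraPower.mk (U := U) (N := N)) V x w
  have h₂ (j : J) := Function.comp_update (fun v : J → N.Dom => v j) V x w
  simp only [Function.comp_def] at h₁ h₂
  rw [← h₁, hφ]
  simp only [h₂]

/-- Łoś's theorem. In the quantifier steps, suprema and infima in the finite chain `A` are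
attained, so they commute with limits along `U`. -/
theorem Formula.val_ultraPower (φ : Formula L) (V : ℕ → J → N.Dom) :
    φ.val (ultraPower U N) (fun n => ultraPower.mk (V n)) =
      U.limFinite fun j => φ.val N fun n => V n j := by
  induction φ generalizing V with
  | rel P ts => simp only [Formula.val, Term.val_ultraPower, ultraPower.relMap_mk]
  | eq t₁ t₂ =>
    simp only [Formula.val, Term.val_ultraPower, Ultrafilter.limFinite_ite]
    exact if_congr ultraPower.mk_eq_mk rfl rfl
  | sconj φ ψ ihφ ihψ | wconj φ ψ ihφ ihψ | wdisj φ ψ ihφ ihψ | impl φ ψ ihφ ihψ =>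
    simp only [Formula.val, ihφ, ihψ]
    exact (Ultrafilter.limFinite_map₂ _ _ _).symm
  | all x φ ih =>
    simp only [Formula.val, ← ultraPower.mk_surjective.iInf_comp,
      Formula.val_update_ultraPower ih]
    exact Ultrafilter.iInf_limFinite fun j b => φ.val N (Function.update (fun n => V n j) x b)
  | ex x φ ih =>
    simp only [Formula.val, ← ultraPower.mk_surjective.iSup_comp,
      Formula.val_update_ultraPower ih]
    exact Ultrafilter.iSup_limFinite fun j b => φ.val N (Function.update (fun n => V n j) x b)

theorem ultraPower_elemEquiv : ElemEquiv (ultraPower U N) N := by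
  intro σ hσ
  let v : ℕ → N.Dom := fun _ => Classical.ofNonempty
  rw [hσ.valid_iff (fun n => ultraPower.mk fun _ => v n), hσ.valid_iff v, Formula.val_ultraPower,
    Ultrafilter.limFinite_const]

end Ultrapower

namespace Formula

def conjList (l : List (Formula L)) : Formula L :=
  l.foldr .wconj (.eq (.var 0) (.var 0))

theorem qfConj_conjList {l : List (Formula L)} (h : ∀ φ ∈ l, IsAtomicFormula φ) :
    QFConj (conjList l) := by
  induction l with
  | nil => exact .atom (.eq _ _)
  | cons φ l ih => exact .wconj (.atom (h φ List.mem_cons_self)) (ih fun ψ hψ => h ψ (.tail _ hψ))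

theorem fvars_conjList_subset (l : List (Formula L)) :
    (conjList l).fvars ⊆ insert 0 (⋃ φ ∈ l, φ.fvars) := by
  induction l with
  | nil => simp [conjList, Formula.fvars, Term.fvars]
  | cons φ l ih =>
    refine Set.union_subset (fun n hn => Or.inr (Set.mem_biUnion List.mem_cons_self hn))
      (ih.trans (Set.insert_subset_insert ?_))
    exact Set.biUnion_mono (fun ψ hψ => .tail _ hψ) fun _ _ => le_rfl

theorem val_conjList_eq_one_iff {M : Structure L A} {l : List (Formula L)} {v : ℕ → M.Dom} :
    (conjList l).val M v = 1 ↔ ∀ φ ∈ l, φ.val M v = 1 := by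
  induction l with
  | nil => simp [conjList, Formula.val]
  | cons φ l ih =>
    simp only [conjList, List.foldr_cons, Formula.val, MTLChain.inf_eq_one_iff_s11,
      List.forall_mem_cons]
    exact and_congr_right' ih

def exClose (ns : List ℕ) (φ : Formula L) : Formula L :=
  ns.foldr .ex φ

theorem isPP_exClose (ns : List ℕ) {φ : Formula L} (h : IsPP φ) : IsPP (exClose ns φ) := by
  induction ns with
  | nil => exact h
  | cons x ns ih => exact .ex x ih

theorem fvars_exClose (ns : List ℕ) (φ : Formula L) :
    (exClose ns φ).fvars = φ.fvars \ {n | n ∈ ns} := by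
  induction ns with
  | nil => simp [exClose]
  | cons x ns ih =>
    simp only [exClose, List.foldr_cons, Formula.fvars] at ih ⊢
    rw [ih, Set.sdiff_sdiff]
    congr 1
    ext n
    simp

theorem val_exClose_eq_one {M : Structure L A} (ns : List ℕ) {φ : Formula L} {v : ℕ → M.Dom}
    (h : φ.val M v = 1) : (exClose ns φ).val M v = 1 := by
  induction ns generalizing v with
  | nil => exact h
  | cons x ns ih =>
    exact MTLChain.iSup_eq_one_iff_s11.2 ⟨v x, (Function.update_eq_self x v).symm ▸ ih h⟩

theorem exists_val_eq_one_of_exClose {M : Structure L A} {ns : List ℕ} {φ : Formula L}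
    {v : ℕ → M.Dom} (h : (exClose ns φ).val M v = 1) : ∃ w, φ.val M w = 1 := by
  induction ns generalizing v with
  | nil => exact ⟨v, h⟩
  | cons x ns ih => exact ih (MTLChain.iSup_eq_one_iff_s11.1 h).choose_spec

end Formula

/-- The positive diagram of `M`: the facts about `M` a homomorphism out of `M` must preserve. -/
inductive DiagFact (M : Structure L A) : Type u
  | rel (P : L.Pred) (d : Fin (L.predAr P) → M.Dom) (h : M.relMap P d = 1)
  | func (f : L.Func) (d : Fin (L.funcAr f) → M.Dom)

namespace DiagFact

variable {M N : Structure L A}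

def Holds (g : M.Dom → N.Dom) : DiagFact M → Prop
  | rel P d _ => N.relMap P (g ∘ d) = 1
  | func f d => N.funMap f (g ∘ d) = g (M.funMap f d)

theorem isHom_of_forall_holds {g : M.Dom → N.Dom} (h : ∀ q : DiagFact M, q.Holds g) :
    IsHom M N g :=
  ⟨fun f d => (h (.func f d)).symm, fun P d hd => h (.rel P d hd)⟩

def elems : DiagFact M → Finset M.Dom
  | rel _ d _ => Finset.univ.image d
  | func f d => insert (M.funMap f d) (Finset.univ.image d)

theorem holds_of_eqOn_elems {g : M.Dom → M.Dom} (q : DiagFact M) (hg : ∀ a ∈ q.elems, g a = a) :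
    q.Holds g := by
  cases q with
  | rel P d hd =>
    have hgd : g ∘ d = d := funext fun k => hg _ (Finset.mem_image_of_mem d (Finset.mem_univ k))
    show M.relMap P (g ∘ d) = 1
    rw [hgd, hd]
  | func f d =>
    have hgd : g ∘ d = d := funext fun k =>
      hg _ (Finset.mem_insert_of_mem (Finset.mem_image_of_mem d (Finset.mem_univ k)))
    show M.funMap f (g ∘ d) = g (M.funMap f d)
    rw [hgd, hg _ (Finset.mem_insert_self _ _)]

/-- The atomic formula expressing `q`, the element `a` being named by the variable `enc a`. -/
def formula (enc : M.Dom → ℕ) : DiagFact M → Formula L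
  | rel P d _ => .rel P fun k => .var (enc (d k))
  | func f d => .eq (.func f fun k => .var (enc (d k))) (.var (enc (M.funMap f d)))

theorem isAtomicFormula_formula (enc : M.Dom → ℕ) (q : DiagFact M) :
    IsAtomicFormula (q.formula enc) := by
  cases q <;> constructor

theorem fvars_formula_subset (enc : M.Dom → ℕ) (q : DiagFact M) :
    (q.formula enc).fvars ⊆ enc '' q.elems := by
  cases q <;> simp [formula, elems, Formula.fvars, Term.fvars, Set.range_comp', Set.image_insert_eq]

theorem val_formula_eq_one_iff (enc : M.Dom → ℕ) (q : DiagFact M) (β : ℕ → N.Dom) :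
    (q.formula enc).val N β = 1 ↔ q.Holds (β ∘ enc) ∨ (1 : A) = ⊥ := by
  cases q with
  | rel P d hd => exact ⟨Or.inl, fun h => h.elim id (MTLChain.eq_one_of_one_eq_bot · _)⟩
  | func f d => exact MTLChain.ite_eq_one_iff

/-- The variable `0`, free in the unit of `Formula.conjList`, is always quantified. -/
def sentence (enc : M.Dom → ℕ) (F : Finset (DiagFact M)) : Formula L :=
  Formula.exClose (insert 0 ((F.biUnion elems).image enc)).toList
    (Formula.conjList (F.toList.map (formula enc)))

theorem isPP_sentence (enc : M.Dom → ℕ) (F : Finset (DiagFact M)) : IsPP (sentence enc F) :=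
  Formula.isPP_exClose _ (.base (Formula.qfConj_conjList fun φ hφ => by
    obtain ⟨q, -, rfl⟩ := List.mem_map.1 hφ
    exact q.isAtomicFormula_formula enc))

theorem sentence_isSentence (enc : M.Dom → ℕ) (F : Finset (DiagFact M)) :
    (sentence enc F).IsSentence := by
  rw [Formula.IsSentence, sentence, Formula.fvars_exClose, Set.sdiff_eq_empty]
  intro n hn
  simp only [Finset.mem_toList, Finset.mem_insert, Finset.mem_image, Finset.mem_biUnion]
  rcases Formula.fvars_conjList_subset _ hn with rfl | hn
  · exact Or.inl rfl
  · simp only [Set.mem_iUnion, List.mem_map, Finset.mem_toList] at hn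
    obtain ⟨_, ⟨q, hq, rfl⟩, hn⟩ := hn
    obtain ⟨a, ha, rfl⟩ := q.fvars_formula_subset enc hn
    exact Or.inr ⟨a, ⟨q, hq, ha⟩, rfl⟩

theorem valid_sentence {enc : M.Dom → ℕ} {F : Finset (DiagFact M)}
    (henc : Set.InjOn enc (F.biUnion elems)) : Valid M (sentence enc F) := by
  set dec := Function.invFunOn enc (F.biUnion elems)
  refine ((sentence_isSentence enc F).valid_iff dec).2 (Formula.val_exClose_eq_one _ ?_)
  refine Formula.val_conjList_eq_one_iff.2 fun φ hφ => ?_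
  obtain ⟨q, hq, rfl⟩ := List.mem_map.1 hφ
  refine (q.val_formula_eq_one_iff enc dec).2 (Or.inl (q.holds_of_eqOn_elems fun a ha => ?_))
  exact henc.leftInvOn_invFunOn (Finset.mem_biUnion.2 ⟨q, Finset.mem_toList.1 hq, ha⟩)

theorem exists_holds_of_valid_sentence (hone : (1 : A) ≠ ⊥) {enc : M.Dom → ℕ}
    {F : Finset (DiagFact M)} (h : Valid N (sentence enc F)) :
    ∃ g : M.Dom → N.Dom, ∀ q ∈ F, q.Holds g := by
  obtain ⟨β, hβ⟩ := Formula.exists_val_eq_one_of_exClose (h fun _ => Classical.ofNonempty)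
  refine ⟨β ∘ enc, fun q hq => ((q.val_formula_eq_one_iff enc β).1 ?_).resolve_right hone⟩
  exact Formula.val_conjList_eq_one_iff.1 hβ _ (List.mem_map.2 ⟨q, Finset.mem_toList.2 hq, rfl⟩)

theorem exists_holds_of_forall_valid_pp (hone : (1 : A) ≠ ⊥)
    (hMN : ∀ σ : Formula L, IsPP σ → σ.IsSentence → Valid M σ → Valid N σ)
    (F : Finset (DiagFact M)) : ∃ g : M.Dom → N.Dom, ∀ q ∈ F, q.Holds g := by
  obtain ⟨enc, henc⟩ := Set.countable_iff_exists_injOn.1 (F.biUnion elems).countable_toSet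
  exact exists_holds_of_valid_sentence hone
    (hMN _ (isPP_sentence enc F) (sentence_isSentence enc F) (valid_sentence henc))

theorem holds_ultraPower_mk_iff {J : Type u} {U : Ultrafilter J} (G : J → M.Dom → N.Dom)
    (q : DiagFact M) :
    q.Holds (fun a => ultraPower.mk (U := U) fun j => G j a) ↔ ∀ᶠ j in U, q.Holds (G j) := by
  cases q with
  | rel P d hd =>
    show (ultraPower U N).relMap P (fun k => ultraPower.mk fun j => G j (d k)) = 1 ↔ _
    rw [ultraPower.relMap_mk, Ultrafilter.limFinite_eq_iff]
    rfl
  | func f d =>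
    show (ultraPower U N).funMap f (fun k => ultraPower.mk fun j => G j (d k)) =
      ultraPower.mk (fun j => G j (M.funMap f d)) ↔ _
    rw [ultraPower.funMap_mk, ultraPower.mk_eq_mk]
    rfl

end DiagFact

theorem exists_isHom_ultraPower {M N : Structure L A} (hone : (1 : A) ≠ ⊥)
    (hMN : ∀ σ : Formula L, IsPP σ → σ.IsSentence → Valid M σ → Valid N σ) :
    ∃ (J : Type u) (U : Ultrafilter J) (h : M.Dom → (ultraPower U N).Dom),
      IsHom M (ultraPower U N) h := by
  choose G hG using DiagFact.exists_holds_of_forall_valid_pp hone hMN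
  let U := Ultrafilter.of (Filter.atTop : Filter (Finset (DiagFact M)))
  refine ⟨_, U, fun a => ultraPower.mk fun F => G F a,
    DiagFact.isHom_of_forall_holds fun q => (q.holds_ultraPower_mk_iff G).2 ?_⟩
  have hq : ∀ᶠ F in (U : Filter (Finset (DiagFact M))), q ∈ F := Ultrafilter.of_le _
    ((Filter.eventually_ge_atTop ({q} : Finset (DiagFact M))).mono
      fun _ hF => Finset.singleton_subset_iff.1 hF)
  exact hq.mono fun F => hG F q

theorem exists_model_valid_pp_imp_consequence {T : Set (Formula L)}
    (hprod : ∀ (I : Type u) [Nonempty I] (Ms : I → Structure L A),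
      (∀ i, Models (Ms i) T) → Models (dirProd Ms) T)
    (hcons : ∃ M : Structure L A, Models M T) :
    ∃ M : Structure L A, Models M T ∧ ∀ σ : Formula L, IsPP σ → σ.IsSentence → Valid M σ →
      ∀ M' : Structure L A, Models M' T → Valid M' σ := by
  obtain ⟨M₀, hM₀⟩ := hcons
  let S :=
    {σ : Formula L // IsPP σ ∧ σ.IsSentence ∧ ∃ M : Structure L A, Models M T ∧ ¬ Valid M σ}
  choose Mσ hMσT hMσ using fun σ : S => σ.2.2.2
  -- the extra factor `M₀` keeps the index type nonempty
  let Ms : Option S → Structure L A := fun o => o.elim M₀ Mσ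
  refine ⟨dirProd Ms, hprod _ Ms fun o => o.rec hM₀ hMσT, fun σ hpp hs hσ => ?_⟩
  by_contra! h
  let σ' : S := ⟨σ, hpp, hs, h⟩
  exact hMσ σ' (hpp.valid_of_isHom hs (isHom_dirProd_eval (some σ')) hσ)

theorem models_of_forall_pp_consequence {T : Set (Formula L)}
    (hsent : ∀ σ ∈ T, σ.IsSentence)
    (hhom : ∀ (M N : Structure L A) (g : M.Dom → N.Dom), IsHom M N g → Models M T → Models N T)
    (hprod : ∀ (I : Type u) [Nonempty I] (Ms : I → Structure L A),
      (∀ i, Models (Ms i) T) → Models (dirProd Ms) T)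
    (hcons : ∃ M : Structure L A, Models M T) {N : Structure L A}
    (hN : ∀ σ : Formula L, IsPP σ → σ.IsSentence →
      (∀ M : Structure L A, Models M T → Valid M σ) → Valid N σ) :
    Models N T := by
  by_cases hone : (1 : A) = ⊥
  · exact fun _ _ _ => MTLChain.eq_one_of_one_eq_bot hone _
  obtain ⟨M, hMT, hM⟩ := exists_model_valid_pp_imp_consequence hprod hcons
  obtain ⟨J, U, h, hh⟩ :=
    exists_isHom_ultraPower hone fun σ hpp hs hσ => hN σ hpp hs (hM σ hpp hs hσ)
  exact fun σ hσ => (ultraPower_elemEquiv σ (hsent σ hσ)).1 (hhom _ _ h hh hMT σ hσ)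

/-- **Theorem 4.1: axiomatization by pp-sentences.**  A consistent theory `T`
(a set of sentences with an `A`-model) is closed under homomorphisms and under
`A`-direct products iff it is axiomatized by a set of positive-primitive
sentences. -/
theorem pp_axiomatization {A : Type u} [MTLChain A] {L : Lang.{u}}
    (T : Set (Formula L)) (hsent : ∀ σ ∈ T, σ.IsSentence)
    (hcons : ∃ M : Structure L A, Models M T) :
    ((∀ (M N : Structure L A) (g : M.Dom → N.Dom),
        IsHom M N g → Models M T → Models N T) ∧
     (∀ (I : Type u) [Nonempty I] (Ms : I → Structure L A),
        (∀ i, Models (Ms i) T) → Models (dirProd Ms) T)) ↔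
      ∃ Sig : Set (Formula L), (∀ σ ∈ Sig, IsPP σ ∧ σ.IsSentence) ∧
        ∀ M : Structure L A, Models M T ↔ Models M Sig := by
  constructor
  · rintro ⟨hhom, hprod⟩
    refine ⟨{σ | IsPP σ ∧ σ.IsSentence ∧ ∀ M : Structure L A, Models M T → Valid M σ},
      fun σ hσ => ⟨hσ.1, hσ.2.1⟩, fun N => ⟨fun hN σ hσ => hσ.2.2 N hN, fun hN => ?_⟩⟩
    exact models_of_forall_pp_consequence hsent hhom hprod hcons
      fun σ hpp hs hT => hN σ ⟨hpp, hs, hT⟩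
  · rintro ⟨Sig, hSig, hT⟩
    refine ⟨fun M N g hg hM => (hT N).2 fun σ hσ => ?_, fun I _ Ms hMs => (hT _).2 fun σ hσ => ?_⟩
    · exact (hSig σ hσ).1.valid_of_isHom (hSig σ hσ).2 hg ((hT M).1 hM σ hσ)
    · exact (hSig σ hσ).1.valid_dirProd fun i => (hT (Ms i)).1 (hMs i) σ hσ
end
end
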